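/- (Discrete reconstruction formula.) With the discrete setup below, defining the discrete curvelet w_{aθb}(x) = (1/(L·L_a)) ∑_{ξ ∈ Ξ} e^{2πi (x−b)·ξ} g_{a,θ}(ξ), every function f : X → ℂ satisfies f(x) = ∑_{(a,θ) ∈ P} ∑_{b ∈ B} W_f(a,θ,b) w_{aθb}(x) (L_a/L_B)² for all x ∈ X. -/

import Mathlib

noncomputable section
open scoped Real
open Finset

/-- The discrete Fourier grid `Ξ = {(ξ₁,ξ₂) ∈ ℤ² : -L/2 ≤ ξᵢ < L/2}` (the conditions are
encoded as `-L ≤ 2ξᵢ < L`). -/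
def Xi (L : ℕ) : Finset (ℤ × ℤ) :=
  ((Finset.Ico (-(L : ℤ)) (L : ℤ)) ×ˢ (Finset.Ico (-(L : ℤ)) (L : ℤ))).filter
    (fun ξ => -(L : ℤ) ≤ 2 * ξ.1 ∧ 2 * ξ.1 < (L : ℤ) ∧ -(L : ℤ) ≤ 2 * ξ.2 ∧ 2 * ξ.2 < (L : ℤ))

/-- The discrete Fourier transform `f̂(ξ) = (1/L) ∑_{x ∈ X} e^{-2πi x·ξ} f(x)`, where the spatial
grid point indexed by `n ∈ (Fin L)²` is `x = (n₁/L, n₂/L)`. -/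
def dft (L : ℕ) (f : Fin L × Fin L → ℂ) (ξ : ℤ × ℤ) : ℂ :=
  (L : ℂ)⁻¹ * ∑ n : Fin L × Fin L,
    Complex.exp (-(2 * ↑π * Complex.I) *
        ((((n.1 : ℕ) : ℂ) * (ξ.1 : ℂ) + ((n.2 : ℕ) : ℂ) * (ξ.2 : ℂ)) / (L : ℂ))) * f n

/-- `L_a = a^{(s+t)/2}`. -/
def La (s t : ℝ) (p : ℝ × ℝ) : ℝ := p.1 ^ ((s + t) / 2)

/-- The discrete general curvelet transform
`W_f(a,θ,b) = (1/L_a) ∑_{ξ ∈ Ξ} e^{2πi b·ξ} g_{a,θ}(ξ) f̂(ξ)`, where the spatial sampling point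
indexed by `m ∈ (Fin L_B)²` is `b = (m₁/L_B, m₂/L_B)`. -/
def Wd (L LB : ℕ) (s t : ℝ) (g : ℝ × ℝ → ℤ × ℤ → ℝ) (p : ℝ × ℝ)
    (f : Fin L × Fin L → ℂ) (m : Fin LB × Fin LB) : ℂ :=
  ((La s t p : ℝ) : ℂ)⁻¹ * ∑ ξ ∈ Xi L,
    Complex.exp ((2 * ↑π * Complex.I) *
        ((((m.1 : ℕ) : ℂ) * (ξ.1 : ℂ) + ((m.2 : ℕ) : ℂ) * (ξ.2 : ℂ)) / (LB : ℂ))) *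
      ((g p ξ : ℝ) : ℂ) * dft L f ξ

/-- The discrete curvelet `w_{aθb}(x) = (1/(L·L_a)) ∑_{ξ ∈ Ξ} e^{2πi (x-b)·ξ} g_{a,θ}(ξ)`, with
`x = (n₁/L, n₂/L)` and `b = (m₁/L_B, m₂/L_B)`. -/
def wdisc (L LB : ℕ) (s t : ℝ) (g : ℝ × ℝ → ℤ × ℤ → ℝ) (p : ℝ × ℝ)
    (m : Fin LB × Fin LB) (n : Fin L × Fin L) : ℂ :=
  ((L : ℂ) * ((La s t p : ℝ) : ℂ))⁻¹ * ∑ ξ ∈ Xi L,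
    Complex.exp ((2 * ↑π * Complex.I) *
        (((((n.1 : ℕ) : ℝ) / L - ((m.1 : ℕ) : ℝ) / LB) * (ξ.1 : ℝ) +
            (((n.2 : ℕ) : ℝ) / L - ((m.2 : ℕ) : ℝ) / LB) * (ξ.2 : ℝ) : ℝ) : ℂ)) *
      ((g p ξ : ℝ) : ℂ)

/-!
Write `ζ_N = exp (2πi / N)`. Every exponential in `Wd` and `wdisc` is a power of `ζ_L` or `ζ_{L_B}`,
so summing `W_f(a,θ,b) w_{aθb}(x)` over the sampling grid `b ∈ B` leaves a character sum of
`ζ_{L_B}` at `ξ - ξ'`, which vanishes unless `ξ ≡ ξ' (mod L_B)`. Since the support of `g_{a,θ}` has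
no two distinct frequencies congruent mod `L_B`, only the diagonal `ξ = ξ'` survives, and the
factors `L_a⁻², L_B²` cancel against `(L_a / L_B)²`: the `(a,θ)`-term is the inverse DFT of
`g_{a,θ}² f̂`. Summing over `(a,θ)` and using `∑ g_{a,θ}² = 1` gives the inverse DFT of `f̂`,
which is `f` by the orthogonality of the characters `ξ ↦ ζ_L^{n·ξ}` on `Ξ`, a complete set of
residues mod `L` in each coordinate.
-/

open Complex

def expRoot (N : ℕ) : ℂ := exp (2 * π * I / N)

lemma isPrimitiveRoot_expRoot {N : ℕ} (hN : N ≠ 0) : IsPrimitiveRoot (expRoot N) N :=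
  isPrimitiveRoot_exp N hN

lemma exp_two_pi_I_mul_intCast_div (N : ℕ) (k : ℤ) :
    exp (2 * π * I * (k / N)) = expRoot N ^ k := by
  rw [expRoot, ← exp_int_mul]
  ring_nf

def dot (x y : ℤ × ℤ) : ℤ := x.1 * y.1 + x.2 * y.2

lemma dot_sub_right (x y z : ℤ × ℤ) : dot x (y - z) = dot x y - dot x z := by
  simp only [dot, Prod.fst_sub, Prod.snd_sub]
  ring

def gridPoint {N : ℕ} (m : Fin N × Fin N) : ℤ × ℤ := (((m.1 : ℕ) : ℤ), ((m.2 : ℕ) : ℤ))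

lemma Fin.intCast_dvd_sub_iff {N : ℕ} (a b : Fin N) :
    (N : ℤ) ∣ ((a : ℕ) : ℤ) - ((b : ℕ) : ℤ) ↔ a = b := by
  refine ⟨fun h => Fin.ext (Nat.ModEq.eq_of_lt_of_lt (Nat.modEq_iff_dvd.2 h) b.isLt a.isLt).symm,
    fun h => by simp [h]⟩

lemma gridPoint_sub_dvd_iff {N : ℕ} (m m' : Fin N × Fin N) :
    ((N : ℤ) ∣ (gridPoint m - gridPoint m').1 ∧ (N : ℤ) ∣ (gridPoint m - gridPoint m').2) ↔
      m = m' := by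
  simp only [gridPoint, Prod.fst_sub, Prod.snd_sub, Fin.intCast_dvd_sub_iff, Prod.ext_iff]

lemma Xi_eq_Ico_product (L : ℕ) :
    Xi L = Ico (-((L : ℤ) / 2)) (-((L : ℤ) / 2) + L) ×ˢ
      Ico (-((L : ℤ) / 2)) (-((L : ℤ) / 2) + L) := by
  ext ξ
  simp only [Xi, mem_filter, mem_product, mem_Ico]
  omega

namespace IsPrimitiveRoot

variable {K : Type*} [Field K] {η : K} {N : ℕ}

theorem sum_range_zpow_mul (hη : IsPrimitiveRoot η N) (k : ℤ) :
    ∑ j ∈ range N, η ^ ((j : ℤ) * k) = if (N : ℤ) ∣ k then (N : K) else 0 := by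
  simp_rw [mul_comm _ k, zpow_mul, zpow_natCast]
  split_ifs with hk
  · simp [(hη.zpow_eq_one_iff_dvd k).2 hk]
  · rw [geom_sum_eq (mt (hη.zpow_eq_one_iff_dvd k).1 hk), ← zpow_natCast, ← zpow_mul, mul_comm,
      zpow_mul, zpow_natCast, hη.pow_eq_one, one_zpow, sub_self, zero_div]

theorem sum_Ico_zpow_mul (hη : IsPrimitiveRoot η N) (hN : N ≠ 0) (a k : ℤ) :
    ∑ ξ ∈ Ico a (a + N), η ^ (ξ * k) = if (N : ℤ) ∣ k then (N : K) else 0 := by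
  rw [Int.Ico_eq_finset_map, sum_map, add_sub_cancel_left, Int.toNat_natCast]
  simp only [Function.Embedding.trans_apply, Nat.castEmbedding_apply, addLeftEmbedding_apply,
    add_mul, zpow_add₀ (hη.ne_zero hN), ← mul_sum, sum_range_zpow_mul hη]
  split_ifs with hk
  · rw [mul_comm a, zpow_mul, (hη.zpow_eq_one_iff_dvd k).2 hk, one_zpow, one_mul]
  · rw [mul_zero]

theorem sum_grid_zpow_dot (hη : IsPrimitiveRoot η N) (hN : N ≠ 0) (k : ℤ × ℤ) :
    ∑ m : Fin N × Fin N, η ^ dot (gridPoint m) k =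
      if (N : ℤ) ∣ k.1 ∧ (N : ℤ) ∣ k.2 then (N : K) ^ 2 else 0 := by
  simp only [dot, gridPoint, zpow_add₀ (hη.ne_zero hN), Fintype.sum_prod_type,
    ← Fintype.sum_mul_sum]
  rw [Fin.sum_univ_eq_sum_range (fun j => η ^ ((j : ℤ) * k.1)),
    Fin.sum_univ_eq_sum_range (fun j => η ^ ((j : ℤ) * k.2)), sum_range_zpow_mul hη,
    sum_range_zpow_mul hη, ite_zero_mul_ite_zero, sq]

theorem sum_Xi_zpow_dot {L : ℕ} (hη : IsPrimitiveRoot η L) (hL : L ≠ 0) (k : ℤ × ℤ) :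
    ∑ ξ ∈ Xi L, η ^ dot ξ k = if (L : ℤ) ∣ k.1 ∧ (L : ℤ) ∣ k.2 then (L : K) ^ 2 else 0 := by
  simp only [Xi_eq_Ico_product, sum_product, dot, zpow_add₀ (hη.ne_zero hL), ← sum_mul_sum]
  rw [sum_Ico_zpow_mul hη hL, sum_Ico_zpow_mul hη hL, ite_zero_mul_ite_zero, sq]

theorem sum_grid_sum_mul_sum (hη : IsPrimitiveRoot η N) (hN : N ≠ 0) {S : Finset (ℤ × ℤ)}
    (a b : ℤ × ℤ → K)
    (hab : ∀ ξ ∈ S, ∀ ξ' ∈ S, ξ ≠ ξ' → a ξ ≠ 0 → b ξ' ≠ 0 →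
      ¬((N : ℤ) ∣ ξ.1 - ξ'.1 ∧ (N : ℤ) ∣ ξ.2 - ξ'.2)) :
    ∑ m : Fin N × Fin N, (∑ ξ ∈ S, η ^ dot (gridPoint m) ξ * a ξ) *
        (∑ ξ ∈ S, η ^ (-dot (gridPoint m) ξ) * b ξ) =
      (N : K) ^ 2 * ∑ ξ ∈ S, a ξ * b ξ := by
  calc _ = ∑ ξ ∈ S, ∑ ξ' ∈ S, a ξ * b ξ' * ∑ m : Fin N × Fin N, η ^ dot (gridPoint m) (ξ - ξ') := by
        simp_rw [sum_mul_sum, mul_sum]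
        rw [sum_comm]
        refine sum_congr rfl fun ξ _ => ?_
        rw [sum_comm]
        refine sum_congr rfl fun ξ' _ => sum_congr rfl fun m _ => ?_
        rw [dot_sub_right, sub_eq_add_neg, zpow_add₀ (hη.ne_zero hN)]
        ring
    _ = ∑ ξ ∈ S, a ξ * b ξ * (N : K) ^ 2 := by
        refine sum_congr rfl fun ξ hξ => ?_
        rw [sum_eq_single_of_mem ξ hξ]
        · simp [sum_grid_zpow_dot hη hN]
        · intro ξ' hξ' hne
          by_cases ha : a ξ = 0
          · simp [ha]
          by_cases hb : b ξ' = 0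
          · simp [hb]
          rw [sum_grid_zpow_dot hη hN, Prod.fst_sub, Prod.snd_sub,
            if_neg (hab ξ hξ ξ' hξ' (Ne.symm hne) ha hb), mul_zero]
    _ = _ := by rw [mul_sum]; exact sum_congr rfl fun _ _ => mul_comm _ _

end IsPrimitiveRoot

lemma dft_eq_sum_zpow (L : ℕ) (f : Fin L × Fin L → ℂ) (ξ : ℤ × ℤ) :
    dft L f ξ = (L : ℂ)⁻¹ * ∑ n, expRoot L ^ (-dot ξ (gridPoint n)) * f n := by
  rw [dft]
  congr 1
  refine sum_congr rfl fun n _ => ?_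
  rw [← exp_two_pi_I_mul_intCast_div]
  congr 2
  push_cast [dot, gridPoint]
  ring

lemma Wd_eq_sum_zpow (L LB : ℕ) (s t : ℝ) (g : ℝ × ℝ → ℤ × ℤ → ℝ) (p : ℝ × ℝ)
    (f : Fin L × Fin L → ℂ) (m : Fin LB × Fin LB) :
    Wd L LB s t g p f m = ((La s t p : ℝ) : ℂ)⁻¹ *
      ∑ ξ ∈ Xi L, expRoot LB ^ dot (gridPoint m) ξ * ((g p ξ : ℂ) * dft L f ξ) := by
  rw [Wd]
  congr 1
  refine sum_congr rfl fun ξ _ => ?_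
  rw [← exp_two_pi_I_mul_intCast_div, ← mul_assoc]
  congr 3
  push_cast [dot, gridPoint]
  ring

lemma wdisc_eq_sum_zpow (L LB : ℕ) (s t : ℝ) (g : ℝ × ℝ → ℤ × ℤ → ℝ) (p : ℝ × ℝ)
    (m : Fin LB × Fin LB) (n : Fin L × Fin L) :
    wdisc L LB s t g p m n = ((L : ℂ) * ((La s t p : ℝ) : ℂ))⁻¹ *
      ∑ ξ ∈ Xi L, expRoot LB ^ (-dot (gridPoint m) ξ) *
        ((g p ξ : ℂ) * expRoot L ^ dot ξ (gridPoint n)) := by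
  rw [wdisc]
  congr 1
  refine sum_congr rfl fun ξ _ => ?_
  have hexp : exp (2 * π * I * ((((n.1 : ℕ) : ℝ) / L - ((m.1 : ℕ) : ℝ) / LB) * (ξ.1 : ℝ) +
        (((n.2 : ℕ) : ℝ) / L - ((m.2 : ℕ) : ℝ) / LB) * (ξ.2 : ℝ) : ℝ)) =
      expRoot LB ^ (-dot (gridPoint m) ξ) * expRoot L ^ dot ξ (gridPoint n) := by
    rw [← exp_two_pi_I_mul_intCast_div, ← exp_two_pi_I_mul_intCast_div, ← exp_add]
    congr 1
    push_cast [dot, gridPoint]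
    ring
  rw [hexp]
  ring

theorem dft_inversion (L : ℕ) (f : Fin L × Fin L → ℂ) (n : Fin L × Fin L) :
    (L : ℂ)⁻¹ * ∑ ξ ∈ Xi L, dft L f ξ * expRoot L ^ dot ξ (gridPoint n) = f n := by
  have hL : L ≠ 0 := n.1.pos.ne'
  have hη := isPrimitiveRoot_expRoot hL
  calc _ = (L : ℂ)⁻¹ ^ 2 *
        ∑ n', f n' * ∑ ξ ∈ Xi L, expRoot L ^ dot ξ (gridPoint n - gridPoint n') := by
        simp_rw [dft_eq_sum_zpow, mul_sum, sum_mul, mul_sum]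
        rw [sum_comm]
        refine sum_congr rfl fun n' _ => sum_congr rfl fun ξ _ => ?_
        rw [dot_sub_right, sub_eq_add_neg, zpow_add₀ (hη.ne_zero hL)]
        ring
    _ = f n := by
        simp_rw [hη.sum_Xi_zpow_dot hL, gridPoint_sub_dvd_iff, mul_ite, mul_zero, sum_ite_eq,
          mem_univ, if_true]
        field_simp

theorem sum_Wd_mul_wdisc {L LB : ℕ} (hLB : LB ≠ 0) {s t : ℝ} {g : ℝ × ℝ → ℤ × ℤ → ℝ}
    {p : ℝ × ℝ} (hLa : La s t p ≠ 0)
    (hg : ∀ ξ ∈ Xi L, ∀ ξ' ∈ Xi L, ξ ≠ ξ' → g p ξ ≠ 0 → g p ξ' ≠ 0 →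
      ¬(((LB : ℤ) ∣ ξ.1 - ξ'.1) ∧ ((LB : ℤ) ∣ ξ.2 - ξ'.2)))
    (f : Fin L × Fin L → ℂ) (n : Fin L × Fin L) :
    ∑ m : Fin LB × Fin LB, Wd L LB s t g p f m * wdisc L LB s t g p m n *
        (((La s t p / (LB : ℝ)) ^ 2 : ℝ) : ℂ) =
      (L : ℂ)⁻¹ *
        ∑ ξ ∈ Xi L, ((g p ξ ^ 2 : ℝ) : ℂ) * dft L f ξ * expRoot L ^ dot ξ (gridPoint n) := by
  set c : ℂ := ((La s t p : ℝ) : ℂ)⁻¹ * ((L : ℂ) * ((La s t p : ℝ) : ℂ))⁻¹ *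
    (((La s t p / (LB : ℝ)) ^ 2 : ℝ) : ℂ)
  have hc : c * (LB : ℂ) ^ 2 = (L : ℂ)⁻¹ := by
    have hLa' : ((La s t p : ℝ) : ℂ) ≠ 0 := ofReal_ne_zero.2 hLa
    simp only [c]
    push_cast
    field_simp
  have hsupp : ∀ ξ ∈ Xi L, ∀ ξ' ∈ Xi L, ξ ≠ ξ' → (g p ξ : ℂ) * dft L f ξ ≠ 0 →
      (g p ξ' : ℂ) * expRoot L ^ dot ξ' (gridPoint n) ≠ 0 →
      ¬(((LB : ℤ) ∣ ξ.1 - ξ'.1) ∧ ((LB : ℤ) ∣ ξ.2 - ξ'.2)) :=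
    fun ξ hξ ξ' hξ' hne ha hb => hg ξ hξ ξ' hξ' hne (by exact_mod_cast left_ne_zero_of_mul ha)
      (by exact_mod_cast left_ne_zero_of_mul hb)
  simp_rw [Wd_eq_sum_zpow, wdisc_eq_sum_zpow]
  calc _ = c * ∑ m : Fin LB × Fin LB,
        (∑ ξ ∈ Xi L, expRoot LB ^ dot (gridPoint m) ξ * ((g p ξ : ℂ) * dft L f ξ)) *
          ∑ ξ ∈ Xi L, expRoot LB ^ (-dot (gridPoint m) ξ) *
            ((g p ξ : ℂ) * expRoot L ^ dot ξ (gridPoint n)) := by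
        rw [mul_sum]
        exact sum_congr rfl fun m _ => by ring
    _ = c * (LB : ℂ) ^ 2 * ∑ ξ ∈ Xi L,
          (g p ξ : ℂ) * dft L f ξ * ((g p ξ : ℂ) * expRoot L ^ dot ξ (gridPoint n)) := by
        rw [(isPrimitiveRoot_expRoot hLB).sum_grid_sum_mul_sum hLB _ _ hsupp, ← mul_assoc]
    _ = _ := by
        rw [hc]
        congr 1
        refine sum_congr rfl fun ξ _ => ?_
        push_cast
        ring

theorem statement11_general (L LB : ℕ) (hLB : 0 < LB)
    (s t : ℝ)
    (P : Finset (ℝ × ℝ)) (hP : ∀ p ∈ P, 1 ≤ p.1)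
    (g : ℝ × ℝ → ℤ × ℤ → ℝ)
    (hg1 : ∀ ξ ∈ Xi L, ∑ p ∈ P, (g p ξ) ^ 2 = 1)
    (hg2 : ∀ p ∈ P, ∀ ξ ∈ Xi L, ∀ ξ' ∈ Xi L, ξ ≠ ξ' → g p ξ ≠ 0 → g p ξ' ≠ 0 →
      ¬(((LB : ℤ) ∣ ξ.1 - ξ'.1) ∧ ((LB : ℤ) ∣ ξ.2 - ξ'.2)))
    (f : Fin L × Fin L → ℂ) :
    ∀ n : Fin L × Fin L,
      f n = ∑ p ∈ P, ∑ m : Fin LB × Fin LB,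
        Wd L LB s t g p f m * wdisc L LB s t g p m n *
          (((La s t p / (LB : ℝ)) ^ 2 : ℝ) : ℂ) := by
  intro n
  have hLa : ∀ p ∈ P, La s t p ≠ 0 := fun p hp =>
    (Real.rpow_pos_of_pos (one_pos.trans_le (hP p hp)) _).ne'
  calc f n = (L : ℂ)⁻¹ * ∑ ξ ∈ Xi L, dft L f ξ * expRoot L ^ dot ξ (gridPoint n) :=
        (dft_inversion L f n).symm
    _ = ∑ p ∈ P, (L : ℂ)⁻¹ *
          ∑ ξ ∈ Xi L, ((g p ξ ^ 2 : ℝ) : ℂ) * dft L f ξ * expRoot L ^ dot ξ (gridPoint n) := by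
        rw [← mul_sum, sum_comm]
        refine congrArg _ (sum_congr rfl fun ξ hξ => ?_)
        rw [← sum_mul, ← sum_mul, ← ofReal_sum, hg1 ξ hξ, ofReal_one, one_mul]
    _ = _ := sum_congr rfl fun p hp => (sum_Wd_mul_wdisc hLB.ne' (hLa p hp) (hg2 p hp) f n).symm

/-- Discrete reconstruction formula. With windows `g_{a,θ}` that are
non-negative, satisfy `∑_{(a,θ) ∈ P} g_{a,θ}(ξ)² = 1` on `Ξ`, and whose supports contain no two
distinct frequencies congruent mod `L_B` in both coordinates, every `f : X → ℂ` satisfies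
`f(x) = ∑_{(a,θ) ∈ P} ∑_{b ∈ B} W_f(a,θ,b) w_{aθb}(x) (L_a/L_B)²` for all `x ∈ X`. -/
theorem statement11 (L LB : ℕ) (hL : 0 < L) (hLB : 0 < LB)
    (s t : ℝ) (hs : 1 / 2 < s) (hst : s < t) (ht : t < 1)
    (P : Finset (ℝ × ℝ)) (hP : ∀ p ∈ P, 1 ≤ p.1)
    (g : ℝ × ℝ → ℤ × ℤ → ℝ)
    (hg0 : ∀ p ∈ P, ∀ ξ ∈ Xi L, 0 ≤ g p ξ)
    (hg1 : ∀ ξ ∈ Xi L, ∑ p ∈ P, (g p ξ) ^ 2 = 1)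
    (hg2 : ∀ p ∈ P, ∀ ξ ∈ Xi L, ∀ ξ' ∈ Xi L, ξ ≠ ξ' → g p ξ ≠ 0 → g p ξ' ≠ 0 →
      ¬(((LB : ℤ) ∣ ξ.1 - ξ'.1) ∧ ((LB : ℤ) ∣ ξ.2 - ξ'.2)))
    (f : Fin L × Fin L → ℂ) :
    ∀ n : Fin L × Fin L,
      f n = ∑ p ∈ P, ∑ m : Fin LB × Fin LB,
        Wd L LB s t g p f m * wdisc L LB s t g p m n *
          (((La s t p / (LB : ℝ)) ^ 2 : ℝ) : ℂ) :=
  statement11_general L LB hLB s t P hP g hg1 hg2 f
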